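/- arXiv:math/0612169 — 4 statements merged into one kernel-verified Lean document; each statement's English description precedes it below -/
import Mathlib

section
/- Let G be a topological group acting continuously on topological spaces Σ and Z, where Σ is Hausdorff, and let q : Σ → Z be a G-equivariant local homeomorphism. Assume that every z ∈ Z admits arbitrarily small open neighborhoods V (i.e., for every neighborhood U of z there is an open V with z ∈ V ⊆ U having the stated property) together with a sequence (z_n) converging to z such that for every n the set {g ∈ G : g·z_n ∈ V} is path-connected. Then q is injective on every G-orbit of Σ: for all ζ ∈ Σ and g ∈ G, q(g·ζ) = q(ζ) implies g·ζ = ζ. -/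
/-!
Suppose `q (g • ζ) = q ζ =: z` but `g • ζ ≠ ζ`. Take a chart `e` of `q` around `ζ` whose source
misses a neighbourhood `O` of `g • ζ`, and a good neighbourhood `V ⊆ e.target` of `z` with
its sequence `zₙ → z`. For large `n`, both `zₙ` and `g • zₙ` lie in `V` and `g • e.symm zₙ ∈ O`.
A path `γ` from `1` to `g` with `γ t • zₙ ∈ V` has two lifts through `q` starting at
`e.symm zₙ`, namely `t ↦ γ t • e.symm zₙ` and `t ↦ e.symm (γ t • zₙ)`. By uniqueness of lifts
they agree at `t = 1`, which puts `g • e.symm zₙ` in `e.source`, away from `O`.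
-/

open Filter Topology Set

theorem OpenPartialHomeomorph.smul_symm_eq_symm_smul_of_path {G X Z : Type*} [Group G]
    [TopologicalSpace G] [TopologicalSpace X] [TopologicalSpace Z] [T2Space X]
    [MulAction G X] [MulAction G Z] [ContinuousSMul G X] [ContinuousSMul G Z] {q : X → Z}
    (hq : IsLocallyInjective q) (heq : ∀ (g : G) (ζ : X), q (g • ζ) = g • q ζ)
    (e : OpenPartialHomeomorph X Z) (hqe : EqOn q e e.source) {w : Z} {g : G}
    (γ : Path 1 g) (hγ : ∀ t, γ t • w ∈ e.target) :
    g • e.symm w = e.symm (g • w) := by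
  have hw : w ∈ e.target := by simpa using hγ 0
  have hq_symm : ∀ v ∈ e.target, q (e.symm v) = v := fun v hv => by
    rw [hqe (e.map_target hv), e.right_inv hv]
  have hlifts : (fun t => γ t • e.symm w) = fun t => e.symm (γ t • w) := by
    refine (T2Space.isSeparatedMap q).eq_of_comp_eq hq (γ.continuous.smul continuous_const)
      (e.continuousOn_symm.comp_continuous (γ.continuous.smul continuous_const) hγ)
      ?_ 0 (by simp)
    ext t
    simp only [Function.comp_apply, heq, hq_symm _ hw, hq_symm _ (hγ t)]
  simpa using congr_fun hlifts 1

theorem stmt_0_general {G : Type*} [Group G] [TopologicalSpace G]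
    {X Z : Type*} [TopologicalSpace X] [TopologicalSpace Z] [T2Space X]
    [MulAction G X] [MulAction G Z] [ContinuousSMul G X] [ContinuousSMul G Z]
    (q : X → Z) (hq : IsLocalHomeomorph q)
    (heq : ∀ (g : G) (ζ : X), q (g • ζ) = g • q ζ)
    (hyp : ∀ z : Z, ∀ U ∈ nhds z, ∃ V : Set Z, IsOpen V ∧ z ∈ V ∧ V ⊆ U ∧
      ∃ zs : ℕ → Z, Filter.Tendsto zs Filter.atTop (nhds z) ∧
        ∀ n : ℕ, IsPathConnected {g : G | g • zs n ∈ V}) :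
    ∀ (ζ : X) (g : G), q (g • ζ) = q ζ → g • ζ = ζ := by
  intro ζ g hqg
  by_contra hne
  obtain ⟨O₁, O₂, hO₁, hO₂, hζO₁, hgζO₂, hdisj⟩ := t2_separation (Ne.symm hne)
  obtain ⟨e₀, hζe₀, hqe₀⟩ := hq ζ
  set e := e₀.restrOpen O₁ hO₁
  have hqe : q = e := hqe₀
  have hζe : ζ ∈ e.source := ⟨hζe₀, hζO₁⟩
  have hqζ : q ζ ∈ e.target := hqe ▸ e.map_source hζe
  obtain ⟨V, hVo, hzV, hVe, zs, hzs, hpc⟩ := hyp (q ζ) e.target (e.open_target.mem_nhds hqζ)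
  have hgzs : Tendsto (fun n => g • zs n) atTop (𝓝 (q ζ)) := by
    have h := ((continuous_const_smul g).tendsto _).comp hzs
    rwa [← heq, hqg] at h
  have hlift : Tendsto (fun n => g • e.symm (zs n)) atTop (𝓝 (g • ζ)) := by
    have h := (e.continuousAt_symm hqζ).tendsto.comp hzs
    rw [hqe, e.left_inv hζe] at h
    exact ((continuous_const_smul g).tendsto ζ).comp h
  obtain ⟨n, ⟨hn, hgn⟩, hgσO₂⟩ := ((hzs.eventually (hVo.mem_nhds hzV)).and
    (hgzs.eventually (hVo.mem_nhds hzV)) |>.and (hlift.eventually (hO₂.mem_nhds hgζO₂))).exists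
  obtain ⟨γ, hγ⟩ := (hpc n).joinedIn 1 (by rwa [mem_ofPred_eq, one_smul]) g hgn
  have hswap := e.smul_symm_eq_symm_smul_of_path hq.isLocallyInjective heq
    (fun x _ => congr_fun hqe x) γ (fun t => hVe (hγ t))
  exact hdisj.ne_of_mem (e.map_target (hVe hgn)).2 hgσO₂ hswap.symm

/-- Lemma 5.6: a `G`-equivariant local homeomorphism is injective on every `G`-orbit,
provided every point of the base admits arbitrarily small open neighbourhoods `V` together
with a sequence `zₙ → z` such that each set `{g : G | g • zₙ ∈ V}` is path-connected. -/
theorem stmt_0 {G : Type*} [Group G] [TopologicalSpace G] [IsTopologicalGroup G]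
    {X Z : Type*} [TopologicalSpace X] [TopologicalSpace Z] [T2Space X]
    [MulAction G X] [MulAction G Z] [ContinuousSMul G X] [ContinuousSMul G Z]
    (q : X → Z) (hq : IsLocalHomeomorph q)
    (heq : ∀ (g : G) (ζ : X), q (g • ζ) = g • q ζ)
    (hyp : ∀ z : Z, ∀ U ∈ nhds z, ∃ V : Set Z, IsOpen V ∧ z ∈ V ∧ V ⊆ U ∧
      ∃ zs : ℕ → Z, Filter.Tendsto zs Filter.atTop (nhds z) ∧
        ∀ n : ℕ, IsPathConnected {g : G | g • zs n ∈ V}) :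
    ∀ (ζ : X) (g : G), q (g • ζ) = q ζ → g • ζ = ζ :=
  stmt_0_general q hq heq hyp
end

section
/- Let Σ and Z be topological spaces with Σ connected and Hausdorff, let q : Σ → Z be a local homeomorphism, and let W ⊆ Σ be a nonempty open connected subset such that the restriction q|_W : W → Z is bijective. Then W = Σ. -/
/-- Lemma 7.5: if `q : Σ → Z` is a local homeomorphism from a connected Hausdorff space and
`W ⊆ Σ` is a nonempty open connected subset on which `q` restricts to a bijection onto `Z`,
then `W = Σ`. -/
theorem stmt_1 {X Z : Type*} [TopologicalSpace X] [TopologicalSpace Z]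
    [ConnectedSpace X] [T2Space X]
    (q : X → Z) (hq : IsLocalHomeomorph q)
    (W : Set X) (hWopen : IsOpen W) (hWconn : IsConnected W)
    (hbij : Set.BijOn q W Set.univ) :
    W = Set.univ := by
  classical
  have hsurj : ∀ z : Z, ∃ x, x ∈ W ∧ q x = z := by
    intro z
    exact (Set.mem_image ..).mp (hbij.surjOn (Set.mem_univ z))
  choose g hgW hgq using hsurj
  have hinj := hbij.injOn
  -- g is continuous
  have hcont : Continuous g := by
    rw [continuous_def]
    intro V hV
    have hpre : g ⁻¹' V = q '' (V ∩ W) := by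
      ext z
      constructor
      · intro hz
        exact ⟨g z, ⟨hz, hgW z⟩, hgq z⟩
      · rintro ⟨x, ⟨hxV, hxW⟩, rfl⟩
        have : g (q x) = x := hinj (hgW _) hxW (hgq _)
        simpa [Set.mem_preimage, this] using hxV
    rw [hpre]
    exact hq.isOpenMap _ (hV.inter hWopen)
  have hcl : IsClosed {x | g (q x) = x} :=
    isClosed_eq (hcont.comp hq.continuous) continuous_id
  have hWS : W = {x | g (q x) = x} := by
    ext x
    constructor
    · intro hx
      exact hinj (hgW _) hx (hgq _)
    · intro hx
      rw [← hx]
      exact hgW _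
  have hclopen : IsClopen W := ⟨hWS ▸ hcl, hWopen⟩
  rcases isClopen_iff.mp hclopen with h | h
  · exact absurd (h ▸ hWconn.nonempty) Set.not_nonempty_empty
  · exact h
end

section
/- Let n ≥ 1. For g ∈ SL(n+1,ℂ) set σ(g) = I_{n,1}·(ḡᵀ)⁻¹·I_{n,1}, where I_{n,1} = diag(1,…,1,−1), and let ⟨z,w⟩_{n,1} = z₁w̄₁ + ⋯ + zₙw̄ₙ − z_{n+1}w̄_{n+1} for z, w ∈ ℂ^{n+1}. Then: (i) for all nonzero z, w, z', w' ∈ ℂ^{n+1} with ⟨z,w⟩_{n,1} ≠ 0 and ⟨z',w'⟩_{n,1} ≠ 0 there exist g ∈ SL(n+1,ℂ) and nonzero scalars λ, μ ∈ ℂ with g·z = λ·z' and σ(g)·w = μ·w'; (ii) the same conclusion holds when instead ⟨z,w⟩_{n,1} = 0 and ⟨z',w'⟩_{n,1} = 0. Consequently, under the action g·([z],[w]) = ([g·z],[σ(g)·w]) on pairs of lines, ℙⁿ × ℙⁿ consists of exactly two SL(n+1,ℂ)-orbits: the set {([z],[w]) : ⟨z,w⟩_{n,1} = 0} and its complement.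 -/
/-- The hermitian form `⟨z,w⟩_{n,1} = z₁w̄₁ + ⋯ + zₙw̄ₙ − z_{n+1}w̄_{n+1}` on `ℂ^{n+1}`. -/
noncomputable def hermForm (n : ℕ) (z w : Fin (n + 1) → ℂ) : ℂ :=
  (∑ i : Fin n, z i.castSucc * starRingEnd ℂ (w i.castSucc)) -
    z (Fin.last n) * starRingEnd ℂ (w (Fin.last n))

/-- The conjugation `σ(g) = I_{n,1} (ḡᵀ)⁻¹ I_{n,1}` of `SL(n+1,ℂ)` relative to `SU(n,1)`. -/
noncomputable def sigmaConj (n : ℕ) (g : Matrix (Fin (n + 1)) (Fin (n + 1)) ℂ) :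
    Matrix (Fin (n + 1)) (Fin (n + 1)) ℂ :=
  Matrix.diagonal (fun i => if i = Fin.last n then (-1 : ℂ) else 1) * g.conjTranspose⁻¹ *
    Matrix.diagonal (fun i => if i = Fin.last n then (-1 : ℂ) else 1)

/-- `(z,w)` and `(z',w')` span pairs of lines in the same `SL(n+1,ℂ)`-orbit for the twisted
action `g·([z],[w]) = ([g·z],[σ(g)·w])`. -/
def relatedPairs (n : ℕ) (z w z' w' : Fin (n + 1) → ℂ) : Prop :=
  ∃ (g : Matrix (Fin (n + 1)) (Fin (n + 1)) ℂ) (lam mu : ℂ),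
    g.det = 1 ∧ lam ≠ 0 ∧ mu ≠ 0 ∧
    g.mulVec z = lam • z' ∧ (sigmaConj n g).mulVec w = mu • w'


/-!
Since `σ(g)ᴴ I_{n,1} g = I_{n,1}`, the form satisfies `⟨g z, σ(g) w⟩_{n,1} = ⟨z, w⟩_{n,1}`, so
whether it vanishes is an invariant of the orbit. Conversely, `w ↦ ⟨·, w⟩_{n,1}` identifies
`ℂ^{n+1}` conjugate-linearly with its dual, and under this identification `σ(g)` acts by
`φ ↦ φ ∘ g⁻¹`. It therefore suffices that `SL(V)` acts transitively, up to scalars, on pairs of a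
nonzero vector `z` and a nonzero functional `φ` with a prescribed answer to `φ z = 0`. A linear
automorphism moves `[z]` to `[z']`; a map `x ↦ x + f x • v` fixing `z'`, where both functionals
are nonzero at `v`, then moves the transported functional to a multiple of `φ'`; and over an
algebraically closed field a scalar multiple of the result has determinant `1`.
-/

open Module

section LinearAlgebra

variable {K V : Type*} [Field K] [AddCommGroup V] [Module K V]

lemma Module.Dual.exists_apply_ne_zero_and_apply_ne_zero {φ ψ : Dual K V} (hφ : φ ≠ 0)
    (hψ : ψ ≠ 0) : ∃ v, φ v ≠ 0 ∧ ψ v ≠ 0 := by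
  obtain ⟨u, hu⟩ := DFunLike.ne_iff.mp hφ
  obtain ⟨v, hv⟩ := DFunLike.ne_iff.mp hψ
  by_cases huψ : ψ u = 0
  · by_cases hvφ : φ v = 0
    · exact ⟨u + v, by simpa [huψ, hvφ] using And.intro hu hv⟩
    · exact ⟨v, hvφ, hv⟩
  · exact ⟨u, hu, huψ⟩

lemma exists_ne_zero_mul_eq_of_eq_zero_iff {a b : K} (h : a = 0 ↔ b = 0) :
    ∃ c ≠ 0, c * a = b := by
  by_cases ha : a = 0
  · exact ⟨1, one_ne_zero, by simp [ha, h.mp ha]⟩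
  · exact ⟨b / a, div_ne_zero (mt h.mpr ha) ha, div_mul_cancel₀ b ha⟩

lemma exists_linearEquiv_apply_eq_smul {z z' : V} (hz : z ≠ 0) (hz' : z' ≠ 0) :
    ∃ e : V ≃ₗ[K] V, ∃ a ≠ (0 : K), e z = a • z' := by
  have := MulAction.isPretransitive_of_is_two_pretransitive (G := V ≃ₗ[K] V)
    (α := Projectivization K V)
  obtain ⟨e, he⟩ := MulAction.exists_smul_eq (V ≃ₗ[K] V) (Projectivization.mk K z hz)
    (Projectivization.mk K z' hz')
  rw [Projectivization.smul_mk, Projectivization.mk_eq_mk_iff] at he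
  obtain ⟨a, ha⟩ := he
  exact ⟨e, a, a.ne_zero, by rw [← LinearEquiv.smul_def, ← ha, Units.smul_def]⟩

variable [FiniteDimensional K V]

lemma exists_det_ne_zero_apply_eq_self_and_comp_eq {φ ψ : Dual K V} (hφ : φ ≠ 0) (hψ : ψ ≠ 0)
    {z : V} (hz : φ z = ψ z) :
    ∃ h : V →ₗ[K] V, LinearMap.det h ≠ 0 ∧ h z = z ∧ ψ ∘ₗ h = φ := by
  obtain ⟨v, hφv, hψv⟩ := Module.Dual.exists_apply_ne_zero_and_apply_ne_zero hφ hψ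
  refine ⟨LinearMap.transvection ((ψ v)⁻¹ • (φ - ψ)) v, ?_, ?_, ?_⟩
  · have hdet : 1 + ((ψ v)⁻¹ • (φ - ψ)) v = φ v / ψ v := by
      simp only [LinearMap.smul_apply, LinearMap.sub_apply, smul_eq_mul]
      field_simp
      ring
    rw [LinearMap.transvection.det, hdet]
    exact div_ne_zero hφv hψv
  · simp [LinearMap.transvection.apply, hz]
  · ext x
    simp only [LinearMap.comp_apply, LinearMap.transvection.apply, LinearMap.smul_apply,
      LinearMap.sub_apply, smul_eq_mul, map_add, map_smul]
    field_simp
    ring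

theorem exists_det_ne_zero_apply_eq_smul_and_comp_eq_smul {z z' : V} {φ φ' : Dual K V}
    (hz : z ≠ 0) (hz' : z' ≠ 0) (hφ : φ ≠ 0) (hφ' : φ' ≠ 0) (h : φ z = 0 ↔ φ' z' = 0) :
    ∃ g : V →ₗ[K] V, LinearMap.det g ≠ 0 ∧ (∃ a ≠ (0 : K), g z = a • z') ∧
      ∃ c ≠ (0 : K), φ' ∘ₗ g = c • φ := by
  obtain ⟨e, a, ha, hez⟩ := exists_linearEquiv_apply_eq_smul (K := K) hz hz'
  have hφe : φ ∘ₗ e.symm.toLinearMap ≠ 0 := fun h0 => hφ <| by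
    ext x; simpa using congrArg (· (e x)) h0
  have hez' : (φ ∘ₗ e.symm.toLinearMap) z' = a⁻¹ * φ z := by
    have : e.symm z' = a⁻¹ • z := by
      rw [LinearEquiv.symm_apply_eq, map_smul, hez, inv_smul_smul₀ ha]
    simp [this]
  obtain ⟨c, hc, hcz⟩ : ∃ c ≠ (0 : K), c * (φ ∘ₗ e.symm.toLinearMap) z' = φ' z' :=
    exists_ne_zero_mul_eq_of_eq_zero_iff (by simpa [hez', ha] using h)
  obtain ⟨k, hk, hkz, hkφ⟩ := exists_det_ne_zero_apply_eq_self_and_comp_eq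
    (smul_ne_zero hc hφe) hφ' (z := z') (by simpa using hcz)
  refine ⟨k ∘ₗ e.toLinearMap, ?_, ⟨a, ha, by simp [hez, hkz]⟩, c, hc, ?_⟩
  · rw [LinearMap.det_comp]
    exact mul_ne_zero hk (LinearEquiv.isUnit_det' e).ne_zero
  · rw [← LinearMap.comp_assoc, hkφ]
    ext x; simp

theorem exists_det_eq_one_apply_eq_smul_and_comp_eq_smul [IsAlgClosed K] {z z' : V}
    {φ φ' : Dual K V} (hz : z ≠ 0) (hz' : z' ≠ 0) (hφ : φ ≠ 0) (hφ' : φ' ≠ 0)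
    (h : φ z = 0 ↔ φ' z' = 0) :
    ∃ g : V →ₗ[K] V, LinearMap.det g = 1 ∧ (∃ a ≠ (0 : K), g z = a • z') ∧
      ∃ c ≠ (0 : K), φ' ∘ₗ g = c • φ := by
  obtain ⟨g, hg, ⟨a, ha, hgz⟩, c, hc, hgφ⟩ :=
    exists_det_ne_zero_apply_eq_smul_and_comp_eq_smul hz hz' hφ hφ' h
  have : Nontrivial V := ⟨⟨z, 0, hz⟩⟩
  have hrank := Module.finrank_pos (R := K) (M := V)
  obtain ⟨t, ht⟩ := IsAlgClosed.exists_pow_nat_eq (LinearMap.det g)⁻¹ hrank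
  have ht0 : t ≠ 0 := ne_zero_pow hrank.ne' (ht ▸ inv_ne_zero hg)
  refine ⟨t • g, ?_, ⟨t * a, mul_ne_zero ht0 ha, by simp [hgz, smul_smul]⟩, t * c,
    mul_ne_zero ht0 hc, ?_⟩
  · rw [LinearMap.det_smul, ht, inv_mul_cancel₀ hg]
  · rw [LinearMap.comp_smul, hgφ, smul_smul]

end LinearAlgebra

open Matrix ComplexConjugate

section HermForm

variable {n : ℕ}

noncomputable def signatureMatrix (n : ℕ) : Matrix (Fin (n + 1)) (Fin (n + 1)) ℂ :=
  diagonal fun i => if i = Fin.last n then (-1 : ℂ) else 1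

lemma signatureMatrix_mul_self : signatureMatrix n * signatureMatrix n = 1 := by
  rw [signatureMatrix, diagonal_mul_diagonal, ← diagonal_one]
  congr 1
  ext i
  split_ifs <;> norm_num

lemma conjTranspose_signatureMatrix : (signatureMatrix n)ᴴ = signatureMatrix n := by
  rw [signatureMatrix, diagonal_conjTranspose]
  congr 1
  ext i
  by_cases h : i = Fin.last n <;> simp [h]

lemma sigmaConj_eq (g : Matrix (Fin (n + 1)) (Fin (n + 1)) ℂ) :
    sigmaConj n g = signatureMatrix n * gᴴ⁻¹ * signatureMatrix n := rfl

lemma conjTranspose_sigmaConj_mul_mul {g : Matrix (Fin (n + 1)) (Fin (n + 1)) ℂ}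
    (hg : IsUnit g.det) : (sigmaConj n g)ᴴ * signatureMatrix n * g = signatureMatrix n := by
  rw [sigmaConj_eq, conjTranspose_mul, conjTranspose_mul, ← conjTranspose_nonsing_inv,
    conjTranspose_conjTranspose, conjTranspose_signatureMatrix]
  simp only [Matrix.mul_assoc]
  rw [← Matrix.mul_assoc (signatureMatrix n) (signatureMatrix n), signatureMatrix_mul_self,
    Matrix.one_mul, nonsing_inv_mul _ hg, Matrix.mul_one]

lemma hermForm_eq_dotProduct (z w : Fin (n + 1) → ℂ) :
    hermForm n z w = star w ⬝ᵥ (signatureMatrix n *ᵥ z) := by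
  rw [hermForm, dotProduct, Fin.sum_univ_castSucc]
  simp [signatureMatrix, mulVec_diagonal, Fin.castSucc_ne_last, sub_eq_add_neg, mul_comm]

lemma hermForm_mulVec_sigmaConj {g : Matrix (Fin (n + 1)) (Fin (n + 1)) ℂ} (hg : IsUnit g.det)
    (z w : Fin (n + 1) → ℂ) :
    hermForm n (g *ᵥ z) (sigmaConj n g *ᵥ w) = hermForm n z w := by
  rw [hermForm_eq_dotProduct, hermForm_eq_dotProduct, star_mulVec, ← dotProduct_mulVec,
    mulVec_mulVec, mulVec_mulVec, conjTranspose_sigmaConj_mul_mul hg]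

lemma hermForm_smul_left (a : ℂ) (z w : Fin (n + 1) → ℂ) :
    hermForm n (a • z) w = a * hermForm n z w := by
  simp only [hermForm_eq_dotProduct, mulVec_smul, dotProduct_smul, smul_eq_mul]

lemma hermForm_smul_right (b : ℂ) (z w : Fin (n + 1) → ℂ) :
    hermForm n z (b • w) = conj b * hermForm n z w := by
  simp only [hermForm_eq_dotProduct, star_smul, smul_dotProduct, smul_eq_mul, Complex.star_def]

noncomputable def hermFunctional (n : ℕ) (w : Fin (n + 1) → ℂ) :
    Module.Dual ℂ (Fin (n + 1) → ℂ) where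
  toFun z := hermForm n z w
  map_add' z z' := by simp only [hermForm_eq_dotProduct, mulVec_add, dotProduct_add]
  map_smul' a z := hermForm_smul_left a z w

@[simp]
lemma hermFunctional_apply (w z : Fin (n + 1) → ℂ) : hermFunctional n w z = hermForm n z w := rfl

lemma hermFunctional_injective : Function.Injective (hermFunctional n) := by
  intro w w' h
  have hdot (z : Fin (n + 1) → ℂ) : star w ⬝ᵥ z = star w' ⬝ᵥ z := by
    simpa [hermForm_eq_dotProduct, signatureMatrix_mul_self] using
      LinearMap.congr_fun h (signatureMatrix n *ᵥ z)
  refine star_injective (funext fun i => ?_)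
  simpa using hdot (Pi.single i 1)

lemma hermFunctional_ne_zero {w : Fin (n + 1) → ℂ} (hw : w ≠ 0) : hermFunctional n w ≠ 0 := by
  have h0 : hermFunctional n 0 = 0 := by ext; simp [hermForm]
  exact fun h => hw (hermFunctional_injective (h.trans h0.symm))

lemma sigmaConj_mulVec_eq_smul {g : Matrix (Fin (n + 1)) (Fin (n + 1)) ℂ} (hg : IsUnit g.det)
    {w w' : Fin (n + 1) → ℂ} {c : ℂ} (hc : c ≠ 0)
    (h : hermFunctional n w' ∘ₗ toLin' g = c • hermFunctional n w) :
    sigmaConj n g *ᵥ w = (conj c)⁻¹ • w' := by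
  refine hermFunctional_injective (LinearMap.ext fun x => ?_)
  obtain ⟨y, rfl⟩ : ∃ y, g *ᵥ y = x :=
    ⟨g⁻¹ *ᵥ x, by rw [mulVec_mulVec, mul_nonsing_inv _ hg, one_mulVec]⟩
  have hy := LinearMap.congr_fun h y
  simp only [LinearMap.comp_apply, toLin'_apply, hermFunctional_apply, LinearMap.smul_apply,
    smul_eq_mul] at hy
  simp only [hermFunctional_apply, hermForm_mulVec_sigmaConj hg, hermForm_smul_right, map_inv₀,
    Complex.conj_conj, hy, inv_mul_cancel_left₀ hc]

lemma relatedPairs_of_eq_zero_iff {z w z' w' : Fin (n + 1) → ℂ} (hz : z ≠ 0) (hw : w ≠ 0)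
    (hz' : z' ≠ 0) (hw' : w' ≠ 0) (h : hermForm n z w = 0 ↔ hermForm n z' w' = 0) :
    relatedPairs n z w z' w' := by
  obtain ⟨g, hg, ⟨a, ha, hgz⟩, c, hc, hgφ⟩ := exists_det_eq_one_apply_eq_smul_and_comp_eq_smul
    hz hz' (hermFunctional_ne_zero hw) (hermFunctional_ne_zero hw') h
  have hdet : (LinearMap.toMatrix' g).det = 1 := by rw [LinearMap.det_toMatrix', hg]
  refine ⟨LinearMap.toMatrix' g, a, (conj c)⁻¹, hdet, ha, by simpa using hc,
    by rw [LinearMap.toMatrix'_mulVec, hgz], sigmaConj_mulVec_eq_smul (by simp [hdet]) hc ?_⟩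
  rw [toLin'_toMatrix', hgφ]

lemma hermForm_eq_zero_iff_of_relatedPairs {z w z' w' : Fin (n + 1) → ℂ}
    (h : relatedPairs n z w z' w') : hermForm n z w = 0 ↔ hermForm n z' w' = 0 := by
  obtain ⟨g, a, b, hg, ha, hb, hgz, hgw⟩ := h
  have := hermForm_mulVec_sigmaConj (g := g) (by simp [hg]) z w
  rw [hgz, hgw, hermForm_smul_left, hermForm_smul_right] at this
  simp [← this, ha, hb]

end HermForm

theorem stmt_10_general (n : ℕ) :
    (∀ z w z' w' : Fin (n + 1) → ℂ, z ≠ 0 → w ≠ 0 → z' ≠ 0 → w' ≠ 0 →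
      hermForm n z w ≠ 0 → hermForm n z' w' ≠ 0 → relatedPairs n z w z' w') ∧
    (∀ z w z' w' : Fin (n + 1) → ℂ, z ≠ 0 → w ≠ 0 → z' ≠ 0 → w' ≠ 0 →
      hermForm n z w = 0 → hermForm n z' w' = 0 → relatedPairs n z w z' w') ∧
    (∀ z w z' w' : Fin (n + 1) → ℂ, z ≠ 0 → w ≠ 0 → z' ≠ 0 → w' ≠ 0 →
      hermForm n z w = 0 → hermForm n z' w' ≠ 0 → ¬ relatedPairs n z w z' w') :=
  ⟨fun _ _ _ _ hz hw hz' hw' h h' => relatedPairs_of_eq_zero_iff hz hw hz' hw' (iff_of_false h h'),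
    fun _ _ _ _ hz hw hz' hw' h h' => relatedPairs_of_eq_zero_iff hz hw hz' hw' (iff_of_true h h'),
    fun _ _ _ _ _ _ _ _ h h' hr => h' ((hermForm_eq_zero_iff_of_relatedPairs hr).mp h)⟩

/-- Example 4.7: under the action `g·([z],[w]) = ([g·z],[σ(g)·w])`, the space
`ℙⁿ × ℙⁿ` consists of exactly two `SL(n+1,ℂ)`-orbits, the set `{⟨z,w⟩_{n,1} = 0}` and its
complement. -/
theorem stmt_10 (n : ℕ) (hn : 1 ≤ n) :
    (∀ z w z' w' : Fin (n + 1) → ℂ, z ≠ 0 → w ≠ 0 → z' ≠ 0 → w' ≠ 0 →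
      hermForm n z w ≠ 0 → hermForm n z' w' ≠ 0 → relatedPairs n z w z' w') ∧
    (∀ z w z' w' : Fin (n + 1) → ℂ, z ≠ 0 → w ≠ 0 → z' ≠ 0 → w' ≠ 0 →
      hermForm n z w = 0 → hermForm n z' w' = 0 → relatedPairs n z w z' w') ∧
    (∀ z w z' w' : Fin (n + 1) → ℂ, z ≠ 0 → w ≠ 0 → z' ≠ 0 → w' ≠ 0 →
      hermForm n z w = 0 → hermForm n z' w' ≠ 0 → ¬ relatedPairs n z w z' w') :=
  stmt_10_general n
end

section
/- Let Y = {(z,w) ∈ ℂ × ℂ* : Im z < |w| < 2π + Im z}, where ℂ* = ℂ ∖ {0}. Then the map p : Y → ℂ* × ℂ* defined by p(z,w) = (e^z, w) is injective. -/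
open Real

-- Equal exponentials differ by an element of `2πiℤ`, whose imaginary parts are `0` or at least `2π`.
theorem Complex.eq_of_exp_eq_of_abs_im_sub_lt {z₁ z₂ : ℂ} (hexp : Complex.exp z₁ = Complex.exp z₂)
    (him : |z₁.im - z₂.im| < 2 * π) : z₁ = z₂ := by
  obtain ⟨n, hn⟩ := Complex.exp_eq_exp_iff_exists_int.mp hexp
  have him_sub : z₁.im - z₂.im = n * (2 * π) := by
    rw [hn]
    simp
  have hn_abs : |(n : ℝ)| < 1 := by
    rw [him_sub, abs_mul, abs_of_pos two_pi_pos] at him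
    exact (mul_lt_iff_lt_one_left two_pi_pos).mp him
  have hn_zero : n = 0 := by
    rwa [← Int.cast_abs, ← Int.cast_one, Int.cast_lt, Int.abs_lt_one_iff] at hn_abs
  simpa [hn_zero] using hn

/-- Remark 3.2: the map `(z,w) ↦ (eᶻ, w)` is injective on
`Y = {(z,w) ∈ ℂ × ℂ* : Im z < |w| < 2π + Im z}`. -/
theorem stmt_16 :
    Set.InjOn (fun p : ℂ × ℂ => (Complex.exp p.1, p.2))
      {p : ℂ × ℂ | p.2 ≠ 0 ∧ p.1.im < ‖p.2‖ ∧
        ‖p.2‖ < 2 * Real.pi + p.1.im} := by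
  rintro ⟨z₁, w₁⟩ ⟨-, hlt₁, hgt₁⟩ ⟨z₂, w₂⟩ ⟨-, hlt₂, hgt₂⟩ h
  simp only [Prod.mk.injEq] at h
  obtain ⟨hexp, rfl⟩ := h
  -- both imaginary parts lie in the interval `(‖w‖ - 2π, ‖w‖)` of length `2π`
  have him : |z₁.im - z₂.im| < 2 * π := by
    rw [abs_sub_lt_iff]
    constructor <;> linarith
  rw [Complex.eq_of_exp_eq_of_abs_im_sub_lt hexp him]
end
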